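/- Let {E_1, …, E_m} be a unitary error set on ℂ^N, let K ≤ N be a positive integer with Km ≤ N, and let V : ℂ^K → ℂ^N be an isometry (V†V = I_K) which is a δ-approximate nondegenerate code with respect to {E_1, …, E_m} for some 0 ≤ δ < 1. Define D̂ = Σ_{i=1}^m (V† E_i†) ⊗ |i⟩, a (Km)×N matrix, and let D = (D̂ D̂†)^{−1/2}·D̂ (rounding all singular values of D̂ to 1). Let R be a finite set, let c_{r,i} ∈ ℂ with K_r = Σ_{i=1}^m c_{r,i} E_i satisfying Σ_{r ∈ R} K_r† K_r = I_N, and let c = Σ_{r ∈ R} Σ_{i=1}^m c_{r,i} |i⟩⊗|r⟩ ∈ ℂ^m ⊗ ℂ^R. Then for every positive integer B and every unit vector φ ∈ ℂ^K ⊗ ℂ^B, the vector Σ_{r ∈ R} ((D ⊗ I_B)·((K_r V ⊗ I_B)·φ)) ⊗ |r⟩ (a vector in ℂ^K ⊗ ℂ^m ⊗ ℂ^B ⊗ ℂ^R) is within Euclidean distance δ of the vector obtained from φ ⊗ c by the canonical reordering of tensor factors (ℂ^K ⊗ ℂ^B) ⊗ (ℂ^m ⊗ ℂ^R) → ℂ^K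 ⊗ ℂ^m ⊗ ℂ^B ⊗ ℂ^R. -/

import Mathlib

open scoped Kronecker ComplexOrder
open Matrix MeasureTheory ProbabilityTheory

noncomputable section

/-- The positive semidefinite square root of a positive semidefinite matrix (the Mathlib
definition of December 2024, since removed from Mathlib). -/
def Matrix.PosSemidef.sqrt {n 𝕜 : Type*} [Fintype n] [RCLike 𝕜] [DecidableEq n]
    {A : Matrix n n 𝕜} (hA : A.PosSemidef) : Matrix n n 𝕜 :=
  hA.1.eigenvectorUnitary.1 * diagonal ((↑) ∘ (√·) ∘ hA.1.eigenvalues) *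
    (star hA.1.eigenvectorUnitary : Matrix n n 𝕜)

/-- The Euclidean (ℓ²) norm of a finitely indexed complex vector. -/
def enorm2 {ι : Type*} [Fintype ι] (x : ι → ℂ) : ℝ :=
  Real.sqrt (∑ i, ‖x i‖ ^ 2)

/-- `T` is a `δ`-approximate isometry: every singular value lies in `[1-δ, 1+δ]`,
equivalently `(1-δ)‖c‖ ≤ ‖Tc‖ ≤ (1+δ)‖c‖` for every vector `c`. -/
def IsApproxIsometry {ι κ : Type*} [Fintype ι] [Fintype κ] (δ : ℝ) (T : Matrix ι κ ℂ) : Prop :=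
  ∀ c : κ → ℂ,
    (1 - δ) * enorm2 c ≤ enorm2 (T.mulVec c) ∧ enorm2 (T.mulVec c) ≤ (1 + δ) * enorm2 c

/-- A unitary error set: each `E i` is unitary and `tr((E i)ᴴ E j) = 0` for `i ≠ j`. -/
def IsUnitaryErrorSet {ι : Type*} {N : ℕ} (E : ι → Matrix (Fin N) (Fin N) ℂ) : Prop :=
  (∀ i, (E i)ᴴ * E i = 1 ∧ E i * (E i)ᴴ = 1) ∧
    ∀ i j : ι, i ≠ j → ((E i)ᴴ * E j).trace = 0

/-- The `N × (Km)` matrix `Y = Σ_i E_i V ⊗ ⟨i|`, whose column indexed by `(j, i)`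
is the vector `E_i · V · e_j`. -/
def shiftMat {N K m : ℕ} (E : Fin m → Matrix (Fin N) (Fin N) ℂ) (V : Matrix (Fin N) (Fin K) ℂ) :
    Matrix (Fin N) (Fin K × Fin m) ℂ :=
  Matrix.of fun a ji => (E ji.2 * V) a ji.1

/-- The operator norm (largest singular value) of a complex matrix. -/
def opNorm {ι κ : Type*} [Fintype ι] [Fintype κ] (A : Matrix ι κ ℂ) : ℝ :=
  sSup {r | ∃ c : κ → ℂ, enorm2 c = 1 ∧ r = enorm2 (A.mulVec c)}

/-- The smallest singular value of a (tall) complex matrix. -/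
def sMin {ι κ : Type*} [Fintype ι] [Fintype κ] (A : Matrix ι κ ℂ) : ℝ :=
  sInf {r | ∃ c : κ → ℂ, enorm2 c = 1 ∧ r = enorm2 (A.mulVec c)}

/-- `isometrize G = G (GᴴG)^{-1/2}`: round all singular values of `G` to `1`. -/
def isometrize {N K : ℕ} (G : Matrix (Fin N) (Fin K) ℂ) : Matrix (Fin N) (Fin K) ℂ :=
  G * ((Matrix.posSemidef_conjTranspose_mul_self G).sqrt)⁻¹

/-- Round the singular values of a wide matrix `D̂` to one: `(D̂ D̂ᴴ)^{-1/2} D̂`. -/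
def coisometrize {ι : Type*} [Fintype ι] [DecidableEq ι] {N : ℕ}
    (Dhat : Matrix ι (Fin N) ℂ) : Matrix ι (Fin N) ℂ :=
  ((Matrix.posSemidef_self_mul_conjTranspose Dhat).sqrt)⁻¹ * Dhat

end

/-!
Write `Y` for the shift matrix and `S = (YᴴY)^{1/2}`. Since `‖S x‖ = ‖Y x‖`, the
approximate-isometry hypothesis puts every eigenvalue of `S` within `δ` of `1`; hence `S` is
invertible and `‖S - 1‖ ≤ δ`. The decoder satisfies `D Y = S⁻¹ YᴴY = S`, and
`K_r V = Y (I_K ⊗ |c_r⟩)`, so on every slice `(· , b, r)` the decoded vector minus the target is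
`S - 1` applied to the target slice. The error is therefore at most `δ ‖φ ⊗ c‖ = δ`, where
`‖c‖ = 1` is the trace of the Kraus condition, because `tr (E_iᴴ E_j) = N δ_ij`.
-/

section Enorm2

variable {ι κ : Type*} [Fintype ι] [Fintype κ]

lemma enorm2_nonneg (x : ι → ℂ) : 0 ≤ enorm2 x :=
  Real.sqrt_nonneg _

lemma enorm2_sq (x : ι → ℂ) : enorm2 x ^ 2 = ∑ i, ‖x i‖ ^ 2 :=
  Real.sq_sqrt (by positivity)

lemma enorm2_le_mul_of_sq_le {x : ι → ℂ} {y : κ → ℂ} {δ : ℝ} (hδ : 0 ≤ δ)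
    (h : enorm2 x ^ 2 ≤ δ ^ 2 * enorm2 y ^ 2) : enorm2 x ≤ δ * enorm2 y :=
  le_of_pow_le_pow_left₀ two_ne_zero (by have := enorm2_nonneg y; positivity)
    (by rwa [mul_pow])

lemma enorm2_sq_eq_re_dotProduct (x : ι → ℂ) : enorm2 x ^ 2 = (star x ⬝ᵥ x).re := by
  simp [enorm2_sq, dotProduct, Complex.re_sum, RCLike.conj_mul, ← Complex.ofReal_pow]

lemma enorm2_ofLp (x : EuclideanSpace ℂ ι) : enorm2 ⇑x = ‖x‖ :=
  (EuclideanSpace.norm_eq x).symm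

lemma enorm2_comp_equiv (e : κ ≃ ι) (x : ι → ℂ) : enorm2 (x ∘ e) = enorm2 x := by
  simp only [enorm2, Function.comp_apply, e.sum_comp (fun i => ‖x i‖ ^ 2)]

lemma enorm2_fst_mul_snd (x : ι → ℂ) (y : κ → ℂ) :
    enorm2 (fun p : ι × κ => x p.1 * y p.2) = enorm2 x * enorm2 y := by
  simp only [enorm2, norm_mul, mul_pow, Fintype.sum_prod_type, ← Finset.sum_mul_sum]
  exact Real.sqrt_mul (by positivity) _

lemma enorm2_sq_eq_sum_slices {β ρ : Type*} [Fintype β] [Fintype ρ] (f : (ι × β) × ρ → ℂ) :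
    enorm2 f ^ 2 = ∑ b, ∑ r, enorm2 (fun q => f ((q, b), r)) ^ 2 := by
  simp only [enorm2_sq, Fintype.sum_prod_type]
  rw [Finset.sum_comm]
  exact Finset.sum_congr rfl fun _ _ => Finset.sum_comm

lemma enorm2_le_of_slices {β ρ : Type*} [Fintype β] [Fintype ρ] {f g : (ι × β) × ρ → ℂ}
    {δ : ℝ} (hδ : 0 ≤ δ)
    (h : ∀ b r, enorm2 (fun q => f ((q, b), r)) ≤ δ * enorm2 (fun q => g ((q, b), r))) :
    enorm2 f ≤ δ * enorm2 g := by
  refine enorm2_le_mul_of_sq_le hδ ?_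
  simp only [enorm2_sq_eq_sum_slices f, enorm2_sq_eq_sum_slices g, Finset.mul_sum, ← mul_pow]
  gcongr with b _ r _
  · exact enorm2_nonneg _
  · exact h b r

end Enorm2

section MulVec

variable {ι ι' κ : Type*} [Fintype ι] [Fintype ι'] [Fintype κ]

lemma enorm2_mulVec_sq (A : Matrix ι κ ℂ) (v : κ → ℂ) :
    enorm2 (A *ᵥ v) ^ 2 = (star v ⬝ᵥ (Aᴴ * A) *ᵥ v).re := by
  rw [enorm2_sq_eq_re_dotProduct, star_mulVec, dotProduct_mulVec, dotProduct_mulVec,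
    vecMul_vecMul]

lemma enorm2_mulVec_eq_of_gram_eq {A : Matrix ι κ ℂ} {B : Matrix ι' κ ℂ} (h : Aᴴ * A = Bᴴ * B)
    (v : κ → ℂ) : enorm2 (A *ᵥ v) = enorm2 (B *ᵥ v) :=
  (sq_eq_sq₀ (enorm2_nonneg _) (enorm2_nonneg _)).1 <| by
    rw [enorm2_mulVec_sq, enorm2_mulVec_sq, h]

variable [DecidableEq κ]

lemma enorm2_unitary_mulVec {U : Matrix κ κ ℂ} (hU : U ∈ unitaryGroup κ ℂ) (v : κ → ℂ) :
    enorm2 (U *ᵥ v) = enorm2 v := by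
  simpa using enorm2_mulVec_eq_of_gram_eq (A := U) (B := (1 : Matrix κ κ ℂ))
    (by simpa [star_eq_conjTranspose] using hU.1) v

lemma enorm2_diagonal_mulVec_le {d : κ → ℂ} {δ : ℝ} (hδ : 0 ≤ δ) (hd : ∀ i, ‖d i‖ ≤ δ)
    (v : κ → ℂ) : enorm2 (diagonal d *ᵥ v) ≤ δ * enorm2 v := by
  refine enorm2_le_mul_of_sq_le hδ ?_
  simp only [enorm2_sq, mulVec_diagonal, norm_mul, mul_pow, Finset.mul_sum]
  gcongr with i
  exact hd i

lemma enorm2_unitary_conj_diagonal_mulVec_le {U : Matrix κ κ ℂ} (hU : U ∈ unitaryGroup κ ℂ)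
    {d : κ → ℂ} {δ : ℝ} (hδ : 0 ≤ δ) (hd : ∀ i, ‖d i‖ ≤ δ) (v : κ → ℂ) :
    enorm2 ((U * diagonal d * star U) *ᵥ v) ≤ δ * enorm2 v := by
  rw [← mulVec_mulVec, ← mulVec_mulVec, enorm2_unitary_mulVec hU,
    ← enorm2_unitary_mulVec (Unitary.star_mem hU) v]
  exact enorm2_diagonal_mulVec_le hδ hd _

end MulVec

section Sqrt

variable {n κ : Type*} [Fintype n] [DecidableEq n] [Fintype κ]

lemma unitary_conj_diagonal_mul {U : Matrix n n ℂ} (hU : U ∈ unitaryGroup n ℂ) (d e : n → ℂ) :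
    U * diagonal d * star U * (U * diagonal e * star U) = U * diagonal (d * e) * star U := by
  rw [show diagonal (d * e) = diagonal d * diagonal e from (diagonal_mul_diagonal d e).symm]
  simp only [Matrix.mul_assoc]
  rw [← Matrix.mul_assoc (star U) U, hU.1, Matrix.one_mul]

namespace Matrix.PosSemidef

variable {A : Matrix n n ℂ} (hA : A.PosSemidef)

lemma sqrt_mul_self : hA.sqrt * hA.sqrt = A := by
  conv_rhs => rw [hA.1.spectral_theorem, Unitary.conjStarAlgAut_apply]
  rw [sqrt, unitary_conj_diagonal_mul hA.1.eigenvectorUnitary.2]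
  congr 3
  ext i
  simp [← Complex.ofReal_mul, Real.mul_self_sqrt (hA.eigenvalues_nonneg i)]

lemma sqrt_sub_one : hA.sqrt - 1 = (hA.1.eigenvectorUnitary : Matrix n n ℂ) *
    diagonal (fun i => (√(hA.1.eigenvalues i) : ℂ) - 1) * star hA.1.eigenvectorUnitary := by
  set U : Matrix n n ℂ := ↑hA.1.eigenvectorUnitary
  have hone : (1 : Matrix n n ℂ) = U * diagonal (fun _ => 1) * star U := by
    rw [diagonal_one, Matrix.mul_one, hA.1.eigenvectorUnitary.2.2]
  rw [sqrt, hone, ← Matrix.sub_mul, ← Matrix.mul_sub, diagonal_sub]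
  rfl

lemma eigenvalues_eq_enorm2_sq {B : Matrix κ n ℂ} (hAB : A = Bᴴ * B) (i : n) :
    hA.1.eigenvalues i = enorm2 (B *ᵥ ⇑(hA.1.eigenvectorBasis i)) ^ 2 := by
  rw [enorm2_mulVec_sq, ← hAB]
  exact hA.1.eigenvalues_eq i

end Matrix.PosSemidef

end Sqrt

namespace IsApproxIsometry

variable {n κ : Type*} [Fintype n] [DecidableEq n] [Fintype κ] {δ : ℝ} {Y : Matrix κ n ℂ}
  {A : Matrix n n ℂ}

lemma abs_sqrt_eigenvalues_sub_one_le (hY : IsApproxIsometry δ Y) (hA : A.PosSemidef)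
    (hAY : A = Yᴴ * Y) (i : n) : |√(hA.1.eigenvalues i) - 1| ≤ δ := by
  have hu : enorm2 ⇑(hA.1.eigenvectorBasis i) = 1 := by
    rw [enorm2_ofLp, hA.1.eigenvectorBasis.orthonormal.1 i]
  have hYu := hY ⇑(hA.1.eigenvectorBasis i)
  rw [hu] at hYu
  rw [hA.eigenvalues_eq_enorm2_sq hAY, Real.sqrt_sq (enorm2_nonneg _), abs_le]
  constructor <;> linarith [hYu.1, hYu.2]

lemma enorm2_sqrt_sub_one_mulVec_le (hY : IsApproxIsometry δ Y) (hδ : 0 ≤ δ)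
    (hA : A.PosSemidef) (hAY : A = Yᴴ * Y) (v : n → ℂ) :
    enorm2 ((hA.sqrt - 1) *ᵥ v) ≤ δ * enorm2 v := by
  rw [hA.sqrt_sub_one]
  refine enorm2_unitary_conj_diagonal_mulVec_le hA.1.eigenvectorUnitary.2 hδ (fun i => ?_) v
  rw [← Complex.ofReal_one, ← Complex.ofReal_sub, Complex.norm_real, Real.norm_eq_abs]
  exact hY.abs_sqrt_eigenvalues_sub_one_le hA hAY i

lemma isUnit_sqrt (hY : IsApproxIsometry δ Y) (hδ : δ < 1) (hA : A.PosSemidef)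
    (hAY : A = Yᴴ * Y) : IsUnit hA.sqrt := by
  have hD : IsUnit (diagonal ((↑) ∘ (√·) ∘ hA.1.eigenvalues) : Matrix n n ℂ) := by
    refine isUnit_diagonal.2 (Pi.isUnit_iff.2 fun i => isUnit_iff_ne_zero.2 ?_)
    have := abs_le.1 (hY.abs_sqrt_eigenvalues_sub_one_le hA hAY i)
    exact Complex.ofReal_ne_zero.2 (ne_of_gt (by simp only [Function.comp_apply]; linarith))
  exact (Unitary.isUnit_coe.mul hD).mul Unitary.isUnit_coe.star

end IsApproxIsometry

lemma coisometrize_conjTranspose_mul_self {ι : Type*} [Fintype ι] [DecidableEq ι] {N : ℕ}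
    (Y : Matrix (Fin N) ι ℂ) (hS : IsUnit (posSemidef_self_mul_conjTranspose Yᴴ).sqrt) :
    coisometrize Yᴴ * Y = (posSemidef_self_mul_conjTranspose Yᴴ).sqrt := by
  set S := (posSemidef_self_mul_conjTranspose Yᴴ).sqrt
  have hSS : S * S = Yᴴ * Y := by
    rw [(posSemidef_self_mul_conjTranspose Yᴴ).sqrt_mul_self, conjTranspose_conjTranspose]
  rw [coisometrize, Matrix.mul_assoc, ← hSS, ← Matrix.mul_assoc,
    nonsing_inv_mul _ ((isUnit_iff_isUnit_det _).1 hS), Matrix.one_mul]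

lemma kronecker_one_mulVec_apply {R ι κ β : Type*} [CommSemiring R] [Fintype κ] [Fintype β]
    [DecidableEq β] (A : Matrix ι κ R) (v : κ × β → R) (i : ι) (b : β) :
    ((A ⊗ₖ (1 : Matrix β β R)) *ᵥ v) (i, b) = (A *ᵥ fun k => v (k, b)) i := by
  simp [mulVec, dotProduct, Fintype.sum_prod_type, one_apply]

/-- `I_κ ⊗ |c⟩`. -/
def idKronCol (κ : Type*) {μ : Type*} [DecidableEq κ] (c : μ → ℂ) : Matrix (κ × μ) κ ℂ :=
  of fun p j => if p.1 = j then c p.2 else 0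

lemma idKronCol_mulVec {κ μ : Type*} [Fintype κ] [DecidableEq κ] (c : μ → ℂ) (w : κ → ℂ) :
    idKronCol κ c *ᵥ w = fun p => w p.1 * c p.2 := by
  ext p
  simp [idKronCol, mulVec, dotProduct, mul_comm]

lemma shiftMat_mul_idKronCol {N K m : ℕ} (E : Fin m → Matrix (Fin N) (Fin N) ℂ)
    (V : Matrix (Fin N) (Fin K) ℂ) (c : Fin m → ℂ) :
    shiftMat E V * idKronCol (Fin K) c = (∑ i, c i • E i) * V := by
  rw [Matrix.sum_mul]
  ext a j
  rw [mul_apply, Fintype.sum_prod_type, Finset.sum_comm, Matrix.sum_apply]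
  simp only [shiftMat, idKronCol, of_apply, mul_ite, mul_zero, Finset.sum_ite_eq',
    Finset.mem_univ, if_true, Matrix.smul_mul, Matrix.smul_apply, smul_eq_mul, mul_comm]

namespace IsUnitaryErrorSet

variable {ι : Type*} [Fintype ι] {N : ℕ} {E : ι → Matrix (Fin N) (Fin N) ℂ}

lemma trace_conjTranspose_sum_mul_sum (hE : IsUnitaryErrorSet E) (a b : ι → ℂ) :
    ((∑ i, a i • E i)ᴴ * ∑ i, b i • E i).trace = N * ∑ i, star (a i) * b i := by
  rw [conjTranspose_sum, Finset.sum_mul_sum]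
  simp only [conjTranspose_smul, smul_mul_smul_comm, trace_sum, trace_smul, Finset.mul_sum]
  refine Finset.sum_congr rfl fun i _ => ?_
  rw [Finset.sum_eq_single i (fun j _ hji => by rw [hE.2 i j hji.symm, smul_zero])
    (fun h => absurd (Finset.mem_univ i) h), (hE.1 i).1, trace_one]
  simp [mul_comm]

lemma enorm2_uncurry_eq_one (hE : IsUnitaryErrorSet E) (hN : 0 < N) {R : Type*} [Fintype R]
    (c : R → ι → ℂ) (hkraus : ∑ r : R, (∑ i, c r i • E i)ᴴ * (∑ i, c r i • E i) = 1) :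
    enorm2 (Function.uncurry c) = 1 := by
  have htr := congrArg trace hkraus
  simp only [trace_sum, hE.trace_conjTranspose_sum_mul_sum, trace_one, Fintype.card_fin,
    ← Finset.mul_sum] at htr
  have hsum := (mul_eq_left₀ (Nat.cast_ne_zero.2 hN.ne')).1 htr
  simp only [Complex.star_def, Complex.conj_mul'] at hsum
  rw [enorm2, Real.sqrt_eq_one, Fintype.sum_prod_type]
  simp only [Function.uncurry_apply_pair]
  exact_mod_cast hsum

end IsUnitaryErrorSet

theorem stmt_7_general {N K m : ℕ} (hN : 0 < N)
    (E : Fin m → Matrix (Fin N) (Fin N) ℂ) (hE : IsUnitaryErrorSet E)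
    (V : Matrix (Fin N) (Fin K) ℂ)
    (δ : ℝ) (hδ0 : 0 ≤ δ) (hδ1 : δ < 1)
    (hcode : IsApproxIsometry δ (shiftMat E V))
    {R : Type*} [Fintype R] (c : R → Fin m → ℂ)
    (hkraus : ∑ r : R, (∑ i, c r i • E i)ᴴ * (∑ i, c r i • E i) = 1)
    (B : ℕ)
    (φ : Fin K × Fin B → ℂ) (hφ : enorm2 φ = 1) :
    enorm2 (fun p : ((Fin K × Fin m) × Fin B) × R =>
      ((coisometrize ((shiftMat E V)ᴴ) ⊗ₖ (1 : Matrix (Fin B) (Fin B) ℂ)).mulVec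
          ((((∑ i, c p.2 i • E i) * V) ⊗ₖ (1 : Matrix (Fin B) (Fin B) ℂ)).mulVec φ)) p.1
        - φ (p.1.1.1, p.1.2) * c p.2 p.1.1.2) ≤ δ := by
  set Y := shiftMat E V
  set hG := posSemidef_self_mul_conjTranspose Yᴴ
  have hGY : Yᴴ * Yᴴᴴ = Yᴴ * Y := by rw [conjTranspose_conjTranspose]
  have hDY : coisometrize Yᴴ * Y = hG.sqrt :=
    coisometrize_conjTranspose_mul_self Y (hcode.isUnit_sqrt hδ1 hG hGY)
  let reorder : ((Fin K × Fin m) × Fin B) × R ≃ (Fin K × Fin B) × (R × Fin m) :=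
    { toFun := fun p => ((p.1.1.1, p.1.2), (p.2, p.1.1.2))
      invFun := fun q => (((q.1.1, q.2.2), q.1.2), q.2.1)
      left_inv := fun _ => rfl
      right_inv := fun _ => rfl }
  have htarget : enorm2 (fun p : ((Fin K × Fin m) × Fin B) × R =>
      φ (p.1.1.1, p.1.2) * c p.2 p.1.1.2) = 1 := by
    change enorm2 ((fun q => φ q.1 * Function.uncurry c q.2) ∘ reorder) = 1
    rw [enorm2_comp_equiv, enorm2_fst_mul_snd, hφ, hE.enorm2_uncurry_eq_one hN c hkraus, one_mul]
  refine (enorm2_le_of_slices hδ0 fun b r => ?_).trans_eq (by rw [htarget, mul_one])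
  have hslice : (fun q => ((coisometrize Yᴴ ⊗ₖ (1 : Matrix (Fin B) (Fin B) ℂ)) *ᵥ
      (((∑ i, c r i • E i) * V) ⊗ₖ (1 : Matrix (Fin B) (Fin B) ℂ)) *ᵥ φ) (q, b)
        - φ (q.1, b) * c r q.2) = (hG.sqrt - 1) *ᵥ fun q => φ (q.1, b) * c r q.2 := by
    funext q
    rw [mulVec_mulVec, ← mul_kronecker_mul, Matrix.one_mul, kronecker_one_mulVec_apply,
      ← shiftMat_mul_idKronCol, ← Matrix.mul_assoc, hDY, ← mulVec_mulVec, idKronCol_mulVec,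
      sub_mulVec, one_mulVec]
    rfl
  exact hslice ▸ hcode.enorm2_sqrt_sub_one_mulVec_le hδ0 hG hGY _

/-- for a `δ`-approximate nondegenerate code, the decoded state
`Σ_r (D ⊗ I_B)(K_r V ⊗ I_B)|φ⟩ ⊗ |r⟩` is within Euclidean distance `δ` of (the reordering of)
`|φ⟩ ⊗ |c⟩`. -/
theorem stmt_7 {N K m : ℕ} (hN : 0 < N) (hK : 0 < K) (hm : 0 < m) (hKm : K * m ≤ N)
    (E : Fin m → Matrix (Fin N) (Fin N) ℂ) (hE : IsUnitaryErrorSet E)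
    (V : Matrix (Fin N) (Fin K) ℂ) (hV : Vᴴ * V = 1)
    (δ : ℝ) (hδ0 : 0 ≤ δ) (hδ1 : δ < 1)
    (hcode : IsApproxIsometry δ (shiftMat E V))
    {R : Type*} [Fintype R] [DecidableEq R] (c : R → Fin m → ℂ)
    (hkraus : ∑ r : R, (∑ i, c r i • E i)ᴴ * (∑ i, c r i • E i) = 1)
    (B : ℕ) (hB : 0 < B)
    (φ : Fin K × Fin B → ℂ) (hφ : enorm2 φ = 1) :
    enorm2 (fun p : ((Fin K × Fin m) × Fin B) × R =>
      ((coisometrize ((shiftMat E V)ᴴ) ⊗ₖ (1 : Matrix (Fin B) (Fin B) ℂ)).mulVec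
          ((((∑ i, c p.2 i • E i) * V) ⊗ₖ (1 : Matrix (Fin B) (Fin B) ℂ)).mulVec φ)) p.1
        - φ (p.1.1.1, p.1.2) * c p.2 p.1.1.2) ≤ δ :=
  stmt_7_general hN E hE V δ hδ0 hδ1 hcode c hkraus B φ hφ
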